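/- arXiv:math/0106233 — 6 statements merged into one kernel-verified Lean document; each statement's English description precedes it below -/
import Mathlib

section
/- Let $R_n$ be the algebra of symmetric polynomials $r(t_1,\dots,t_n)$ over $\mathbb{C}$ with the property that after the substitution $t_i = s$, $t_j = -s$ (for any pair $i \ne j$) the result is independent of $s$. Suppose strict partitions $\lambda \ne \mu$ of length $\le n$ (padded with zeros) satisfy $r(\lambda) = r(\mu)$ for all $r \in R_n$. Then $\lambda = \mu$; i.e., the evaluation maps $r \mapsto r(\lambda)$ for distinct strict partitions $\lambda$ of length $\le n$ are pairwise distinct characters of $R_n$. -/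
/-!
The odd power sums `p_{2k+1}` lie in `R_n`, because `s ^ (2k+1) + (-s) ^ (2k+1) = 0`; hence
`λ` and `μ` have the same odd power sums. Over `ℕ` these determine a multiset of fixed size: the
largest entry `m > 0` occurs on both sides, for otherwise `m ^ (2k+1)` eventually exceeds
`n (m - 1) ^ (2k+1)`, so it can be removed from both and we induct. Finally, a weakly decreasing
tuple is determined by its multiset of entries.
-/

open MvPolynomial Filter Topology

theorem exists_mul_odd_pow_lt_odd_pow {a b : ℝ} (ha : 0 ≤ a) (hab : a < b) (c : ℝ) :
    ∃ k : ℕ, c * a ^ (2 * k + 1) < b ^ (2 * k + 1) := by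
  have hb : 0 < b := ha.trans_lt hab
  have hlim : Tendsto (fun k : ℕ => c * (a / b) ^ (2 * k + 1)) atTop (𝓝 0) := by
    simpa using ((tendsto_pow_atTop_nhds_zero_of_lt_one (div_nonneg ha hb.le)
      ((div_lt_one hb).2 hab)).comp
        (tendsto_atTop_mono (fun k => (by omega : k ≤ 2 * k + 1)) tendsto_id)).const_mul c
  obtain ⟨k, hk⟩ := (hlim.eventually (gt_mem_nhds one_pos)).exists
  refine ⟨k, ?_⟩
  rwa [div_pow, ← mul_div_assoc, div_lt_one (pow_pos hb _)] at hk

namespace Multiset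

theorem odd_pow_sum_lt_of_forall_lt {s t : Multiset ℕ} {m : ℕ} (hm : m ∈ s) (hm0 : 0 < m)
    (ht : ∀ x ∈ t, x < m) :
    ∃ k : ℕ, (t.map (· ^ (2 * k + 1))).sum < (s.map (· ^ (2 * k + 1))).sum := by
  obtain ⟨k, hk⟩ := exists_mul_odd_pow_lt_odd_pow (a := ((m - 1 : ℕ) : ℝ)) (b := m)
    (Nat.cast_nonneg _) (Nat.cast_lt.2 (Nat.sub_lt hm0 one_pos)) (card t)
  refine ⟨k, ?_⟩
  calc (t.map (· ^ (2 * k + 1))).sum ≤ card t * (m - 1) ^ (2 * k + 1) := by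
        simpa using sum_le_card_nsmul (t.map (· ^ (2 * k + 1))) _ (by
          simpa using fun x hx => Nat.pow_le_pow_left (Nat.le_sub_one_of_lt (ht x hx)) _)
    _ < m ^ (2 * k + 1) := by exact_mod_cast hk
    _ ≤ (s.map (· ^ (2 * k + 1))).sum := le_sum_of_mem (mem_map_of_mem (· ^ (2 * k + 1)) hm)

theorem eq_of_card_eq_of_odd_pow_sum_eq {s t : Multiset ℕ} (hcard : card s = card t)
    (hsum : ∀ k : ℕ, (s.map (· ^ (2 * k + 1))).sum = (t.map (· ^ (2 * k + 1))).sum) :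
    s = t := by
  induction hn : card s generalizing s t with
  | zero => rw [card_eq_zero.1 hn, card_eq_zero.1 (hcard.symm.trans hn)]
  | succ n ih =>
    obtain ⟨m, hm, hmax⟩ := exists_max_image id (s := s + t) (by simp [← card_eq_zero, hn])
    rcases Nat.eq_zero_or_pos m with rfl | hm0
    · have hzero : ∀ u, u ≤ s + t → u = replicate (card u) 0 := fun u hu =>
        eq_replicate.2 ⟨rfl, fun x hx => Nat.eq_zero_of_le_zero (hmax x (mem_of_le hu hx))⟩
      rw [hzero s (le_add_right _ _), hzero t (le_add_left _ _), hcard]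
    have mem_of_mem : ∀ {u v : Multiset ℕ}, m ∈ u → v ≤ s + t →
        (∀ k, (u.map (· ^ (2 * k + 1))).sum = (v.map (· ^ (2 * k + 1))).sum) → m ∈ v := by
      intro u v hu hv huv
      by_contra hmv
      obtain ⟨k, hk⟩ := odd_pow_sum_lt_of_forall_lt hu hm0 fun x hx =>
        (hmax x (mem_of_le hv hx)).lt_of_ne (by rintro rfl; exact hmv hx)
      exact hk.ne (huv k).symm
    have hms : m ∈ s ∧ m ∈ t := by
      rcases mem_add.1 hm with h | h
      · exact ⟨h, mem_of_mem h (le_add_left _ _) hsum⟩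
      · exact ⟨mem_of_mem h (le_add_right _ _) fun k => (hsum k).symm, h⟩
    obtain ⟨s', rfl⟩ := exists_cons_of_mem hms.1
    obtain ⟨t', rfl⟩ := exists_cons_of_mem hms.2
    simp only [card_cons, map_cons, sum_cons, add_left_cancel_iff, Nat.add_right_cancel_iff]
      at hcard hsum hn
    rw [ih hcard hsum hn]

end Multiset

theorem Fin.eq_of_antitone_of_univ_val_map_eq {α : Type*} [PartialOrder α] {n : ℕ}
    {f g : Fin n → α} (hf : Antitone f) (hg : Antitone g)
    (h : Finset.univ.val.map f = Finset.univ.val.map g) : f = g := by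
  rw [Fin.univ_val_map, Fin.univ_val_map, Multiset.coe_eq_coe] at h
  exact List.ofFn_injective (h.eq_of_sortedGE hf.sortedGE_ofFn hg.sortedGE_ofFn)

theorem MvPolynomial.eval_update_update_neg_psum_of_odd {σ R : Type*} [CommRing R] [Fintype σ]
    [DecidableEq σ] {e : ℕ} (he : Odd e) {i j : σ} (hij : i ≠ j) (v : σ → R) (s s' : R) :
    eval (Function.update (Function.update v i s) j (-s)) (psum σ R e)
      = eval (Function.update (Function.update v i s') j (-s')) (psum σ R e) := by
  have eval_eq (s : R) : eval (Function.update (Function.update v i s) j (-s)) (psum σ R e)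
      = ∑ l ∈ (Finset.univ.erase j).erase i, v l ^ e := by
    have hi : i ∈ Finset.univ.erase j := Finset.mem_erase.2 ⟨hij, Finset.mem_univ i⟩
    simp only [psum, map_sum, map_pow, eval_X]
    rw [← Finset.add_sum_erase _ _ (Finset.mem_univ j), ← Finset.add_sum_erase _ _ hi,
      Function.update_self, Function.update_of_ne hij, Function.update_self, he.neg_pow,
      neg_add_cancel_left]
    refine Finset.sum_congr rfl fun l hl => ?_
    rw [Function.update_of_ne (Finset.ne_of_mem_erase (Finset.mem_of_mem_erase hl)),
      Function.update_of_ne (Finset.ne_of_mem_erase hl)]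
  rw [eval_eq, eval_eq]

theorem stmt4 (n : ℕ) (lam mu : Fin n → ℕ)
    (hlam : ∀ i j : Fin n, i < j → lam j < lam i ∨ lam j = 0)
    (hmu : ∀ i j : Fin n, i < j → mu j < mu i ∨ mu j = 0)
    (h : ∀ r : MvPolynomial (Fin n) ℂ, r.IsSymmetric →
      (∀ i j : Fin n, i ≠ j → ∀ (v : Fin n → ℂ) (s s' : ℂ),
        MvPolynomial.eval (Function.update (Function.update v i s) j (-s)) r
          = MvPolynomial.eval (Function.update (Function.update v i s') j (-s')) r) →
      MvPolynomial.eval (fun i => (lam i : ℂ)) r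
        = MvPolynomial.eval (fun i => (mu i : ℂ)) r) :
    lam = mu := by
  have antitone_of (f : Fin n → ℕ) (hf : ∀ i j : Fin n, i < j → f j < f i ∨ f j = 0) :
      Antitone f :=
    antitone_iff_forall_lt.2 fun i j hij => (hf i j hij).elim le_of_lt fun h0 => h0 ▸ Nat.zero_le _
  have hpsum (k : ℕ) : ∑ i, lam i ^ (2 * k + 1) = ∑ i, mu i ^ (2 * k + 1) := by
    have heval := h _ (psum_isSymmetric _ _ _) fun i j hij =>
      eval_update_update_neg_psum_of_odd (odd_two_mul_add_one k) hij
    simp only [psum, map_sum, map_pow, eval_X] at heval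
    exact_mod_cast heval
  exact Fin.eq_of_antitone_of_univ_val_map_eq (antitone_of lam hlam) (antitone_of mu hmu) <|
    Multiset.eq_of_card_eq_of_odd_pow_sum_eq (by simp) fun k => by
      simpa only [Multiset.map_map, Function.comp_def, ← Finset.sum_eq_multiset_sum] using hpsum k
end

section
/- Let $\mathfrak{g}$ be a Lie superalgebra, and on $U(\mathfrak{g})$ define the twisted adjoint action $x * u = xu - (-1)^{p(x)(p(u)+1)} ux$ for homogeneous $x \in \mathfrak{g}$, $u \in U(\mathfrak{g})$. Then for any finite-dimensional $\mathfrak{g}$-module $V$, the functional $u \mapsto \mathrm{tr}_V(u)$ (ordinary, non-super trace of the action of $u$ on $V$) is invariant under this action: $\mathrm{tr}_V(x * u) = 0$ for all $x \in \mathfrak{g}$, $u \in U(\mathfrak{g})$. -/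
/-- The sign `(-1)^p` attached to a parity `p ∈ ℤ/2`. -/
noncomputable def sgn (t : ZMod 2) : ℂ := if t = 1 then -1 else 1

/-- The projection onto the `i`-th component of a decomposition. -/
noncomputable def projV {V : Type*} [AddCommGroup V] [Module ℂ V]
    (𝒱 : ZMod 2 → Submodule ℂ V) [DirectSum.Decomposition 𝒱] (i : ZMod 2) :
    Module.End ℂ V :=
  (𝒱 i).subtype ∘ₗ (DirectSum.component ℂ (ZMod 2) (fun j => 𝒱 j) i) ∘ₗ
    (DirectSum.decomposeLinearEquiv 𝒱).toLinearMap

lemma projV_apply {V : Type*} [AddCommGroup V] [Module ℂ V]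
    (𝒱 : ZMod 2 → Submodule ℂ V) [DirectSum.Decomposition 𝒱] (i : ZMod 2) (v : V) :
    projV 𝒱 i v = (DirectSum.decompose 𝒱 v i : V) := rfl

lemma projV_of_mem_same {V : Type*} [AddCommGroup V] [Module ℂ V]
    (𝒱 : ZMod 2 → Submodule ℂ V) [DirectSum.Decomposition 𝒱] {i : ZMod 2} {v : V}
    (h : v ∈ 𝒱 i) : projV 𝒱 i v = v := DirectSum.decompose_of_mem_same 𝒱 h

lemma projV_of_mem_ne {V : Type*} [AddCommGroup V] [Module ℂ V]
    (𝒱 : ZMod 2 → Submodule ℂ V) [DirectSum.Decomposition 𝒱] {i j : ZMod 2} {v : V}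
    (h : v ∈ 𝒱 j) (hij : j ≠ i) : projV 𝒱 i v = 0 := DirectSum.decompose_of_mem_ne 𝒱 h hij

lemma projV_sum {V : Type*} [AddCommGroup V] [Module ℂ V]
    (𝒱 : ZMod 2 → Submodule ℂ V) [DirectSum.Decomposition 𝒱] :
    projV 𝒱 0 + projV 𝒱 1 = LinearMap.id := by
  ext v
  classical
  have h := DirectSum.sum_support_decompose 𝒱 v
  have h2 : ∑ i : ZMod 2, (DirectSum.decompose 𝒱 v i : V) = v := by
    calc ∑ i : ZMod 2, (DirectSum.decompose 𝒱 v i : V)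
        = ∑ i ∈ DFinsupp.support (DirectSum.decompose 𝒱 v),
            (DirectSum.decompose 𝒱 v i : V) := by
          refine (Finset.sum_subset (Finset.subset_univ _) ?_).symm
          intro i _ hi
          simp only [DFinsupp.mem_support_iff, not_not] at hi
          rw [hi]; rfl
      _ = v := h
  have h3 : ∑ i : ZMod 2, (DirectSum.decompose 𝒱 v i : V)
      = (DirectSum.decompose 𝒱 v 0 : V) + (DirectSum.decompose 𝒱 v 1 : V) :=
    Fin.sum_univ_two _
  simp only [LinearMap.add_apply, LinearMap.id_apply, projV_apply]
  rw [← h3, h2]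

lemma odd_trace {V : Type*} [AddCommGroup V] [Module ℂ V] [FiniteDimensional ℂ V]
    (𝒱 : ZMod 2 → Submodule ℂ V) [DirectSum.Decomposition 𝒱]
    (f : Module.End ℂ V) (hf : ∀ (j : ZMod 2) (v : V), v ∈ 𝒱 j → f v ∈ 𝒱 (j + 1)) :
    LinearMap.trace ℂ V f = 0 := by
  have hne : ∀ k : ZMod 2, k + 1 ≠ k := by decide
  have key : ∀ i : ZMod 2, LinearMap.trace ℂ V (projV 𝒱 i * f) = 0 := by
    intro i
    have hp : projV 𝒱 i * projV 𝒱 i = projV 𝒱 i := by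
      ext v
      simp only [Module.End.mul_apply]
      exact projV_of_mem_same 𝒱 (by
        rw [projV_apply]; exact ((DirectSum.decompose 𝒱 v) i).2)
    have hz : projV 𝒱 i * (f * projV 𝒱 i) = 0 := by
      ext v
      simp only [Module.End.mul_apply, LinearMap.zero_apply]
      have h1 : projV 𝒱 i v ∈ 𝒱 i := by
        rw [projV_apply]; exact ((DirectSum.decompose 𝒱 v) i).2
      have h2 : f (projV 𝒱 i v) ∈ 𝒱 (i + 1) := hf i _ h1
      exact projV_of_mem_ne 𝒱 h2 (hne i)
    calc LinearMap.trace ℂ V (projV 𝒱 i * f)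
        = LinearMap.trace ℂ V (projV 𝒱 i * projV 𝒱 i * f) := by rw [hp]
      _ = LinearMap.trace ℂ V (projV 𝒱 i * f * projV 𝒱 i) := by
          rw [mul_assoc, LinearMap.trace_mul_comm, mul_assoc]
      _ = 0 := by rw [mul_assoc, hz, map_zero]
  have hid : f = projV 𝒱 0 * f + projV 𝒱 1 * f := by
    rw [← add_mul, projV_sum]; ext v; simp
  rw [hid, map_add, key, key, add_zero]

theorem stmt7
    (A : Type*) [Ring A] [Algebra ℂ A] (𝒜 : ZMod 2 → Submodule ℂ A)
    (hmul : ∀ (i j : ZMod 2) (a b : A), a ∈ 𝒜 i → b ∈ 𝒜 j → a * b ∈ 𝒜 (i + j))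
    (V : Type*) [AddCommGroup V] [Module ℂ V] [FiniteDimensional ℂ V]
    (𝒱 : ZMod 2 → Submodule ℂ V) [DirectSum.Decomposition 𝒱]
    (π : A →ₐ[ℂ] Module.End ℂ V)
    (hπ : ∀ (i j : ZMod 2) (a : A) (v : V), a ∈ 𝒜 i → v ∈ 𝒱 j → π a v ∈ 𝒱 (i + j))
    (x u : A) (px pu : ZMod 2) (hx : x ∈ 𝒜 px) (hu : u ∈ 𝒜 pu) :
    LinearMap.trace ℂ V (π (x * u) - sgn (px * (pu + 1)) • π (u * x)) = 0 := by
  rw [map_sub, LinearMap.map_smul, smul_eq_mul]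
  have hcomm : LinearMap.trace ℂ V (π (x * u)) = LinearMap.trace ℂ V (π (u * x)) := by
    rw [show π (x * u) = π x * π u from map_mul π x u,
        show π (u * x) = π u * π x from map_mul π u x, LinearMap.trace_mul_comm]
  by_cases h : px * (pu + 1) = 1
  · -- px = 1, pu = 0 : u*x is odd
    have hkey : ∀ a b : ZMod 2, a * (b + 1) = 1 → a = 1 ∧ b = 0 := by decide
    obtain ⟨hpx, hpu⟩ := hkey px pu h
    have hodd : u * x ∈ 𝒜 1 := by
      have := hmul pu px u x hu hx; rwa [hpx, hpu, zero_add] at this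
    have h0 : LinearMap.trace ℂ V (π (u * x)) = 0 :=
      odd_trace 𝒱 (π (u * x)) (fun j v hv => by
        have := hπ 1 j (u * x) v hodd hv
        rwa [add_comm] at this)
    rw [hcomm, h0, sgn, if_pos h, mul_zero, sub_zero]
  · rw [sgn, if_neg h, one_mul, hcomm, sub_self]
end

section
/- Let $\mathfrak{q}(n) \subset \mathfrak{gl}(n|n)$ with basis $e_{ij}, f_{ij}$ ($i,j \in \{1,\dots,n\}$, $e_{ij}$ even, $f_{ij}$ odd), and define inductively $e_{ij}^{(1)} = e_{ij}$, $f_{ij}^{(1)} = f_{ij}$, $e_{ij}^{(p)} = \sum_l e_{il} e_{lj}^{(p-1)} + (-1)^{p-1}\sum_l f_{il} f_{lj}^{(p-1)}$, $f_{ij}^{(p)} = \sum_l e_{il} f_{lj}^{(p-1)} + (-1)^{p-1}\sum_l f_{il} e_{lj}^{(p-1)}$ in $U(\mathfrak{q}(n))$. Then $[e_{ij}, e_{kl}^{(p)}] = \delta_{jk} e_{il}^{(p)} - \delta_{il} e_{kj}^{(p)}$ and $[e_{ij}, f_{kl}^{(p)}] = \delta_{jk} f_{il}^{(p)} - \delta_{il}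 f_{kj}^{(p)}$ for all $p \ge 1$. -/
/-- The Gelfand invariants `(e_{ij}^{(p)}, f_{ij}^{(p)})` of `U(𝔮(n))`, defined inductively:
`qGel E F 0 = (E, F)` corresponds to `p = 1`, and `qGel E F k` corresponds to `p = k + 1`,
via `e_{ij}^{(p)} = ∑_l e_{il} e_{lj}^{(p-1)} + (-1)^{p-1} ∑_l f_{il} f_{lj}^{(p-1)}` and
`f_{ij}^{(p)} = ∑_l e_{il} f_{lj}^{(p-1)} + (-1)^{p-1} ∑_l f_{il} e_{lj}^{(p-1)}`. -/
def qGel {n : ℕ} {A : Type*} [Ring A] (E F : Fin n → Fin n → A) :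
    ℕ → (Fin n → Fin n → A) × (Fin n → Fin n → A)
  | 0 => (E, F)
  | (k+1) =>
    (fun i j => (∑ l, E i l * (qGel E F k).1 l j) +
        (-1 : A) ^ (k + 1) * ∑ l, F i l * (qGel E F k).2 l j,
     fun i j => (∑ l, E i l * (qGel E F k).2 l j) +
        (-1 : A) ^ (k + 1) * ∑ l, F i l * (qGel E F k).1 l j)

set_option linter.unusedVariables false in
lemma comm_sum {n : ℕ} {A : Type*} [Ring A] (E G H : Fin n → Fin n → A)
    (hG : ∀ i j k l, E i j * G k l - G k l * E i j =
      (if j = k then G i l else 0) - (if i = l then G k j else 0))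
    (hH : ∀ i j k l, E i j * H k l - H k l * E i j =
      (if j = k then H i l else 0) - (if i = l then H k j else 0)) :
    ∀ i j k l, E i j * (∑ m, G k m * H m l) - (∑ m, G k m * H m l) * E i j =
      (if j = k then ∑ m, G i m * H m l else 0) -
      (if i = l then ∑ m, G k m * H m j else 0) := by
  intro i j k l
  have key : ∀ m : Fin n, E i j * (G k m * H m l) - (G k m * H m l) * E i j =
      ((if j = k then G i m else 0) - (if i = m then G k j else 0)) * H m l
      + G k m * ((if j = m then H i l else 0) - (if i = l then H m j else 0)) := by
    intro m
    rw [← hG i j k m, ← hH i j m l]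
    noncomm_ring
  rw [Finset.mul_sum, Finset.sum_mul, ← Finset.sum_sub_distrib]
  simp only [key]
  rw [Finset.sum_add_distrib]
  split_ifs <;>
    simp [sub_mul, mul_sub, ite_mul, mul_ite, Finset.sum_sub_distrib,
      Finset.sum_ite_eq, Finset.sum_ite_eq'] <;>
    abel

theorem stmt10 (n : ℕ) (A : Type*) [Ring A] (E F : Fin n → Fin n → A)
    -- the defining relations of `𝔮(n)` inside `U(𝔮(n))` (`E` even, `F` odd):
    (hEE : ∀ i j k l, E i j * E k l - E k l * E i j =
      (if j = k then E i l else 0) - (if i = l then E k j else 0))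
    (hEF : ∀ i j k l, E i j * F k l - F k l * E i j =
      (if j = k then F i l else 0) - (if i = l then F k j else 0))
    (hFF : ∀ i j k l, F i j * F k l + F k l * F i j =
      (if j = k then E i l else 0) + (if i = l then E k j else 0)) :
    ∀ (p : ℕ) (i j k l : Fin n),
      (E i j * (qGel E F p).1 k l - (qGel E F p).1 k l * E i j =
        (if j = k then (qGel E F p).1 i l else 0) -
        (if i = l then (qGel E F p).1 k j else 0)) ∧
      (E i j * (qGel E F p).2 k l - (qGel E F p).2 k l * E i j =
        (if j = k then (qGel E F p).2 i l else 0) -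
        (if i = l then (qGel E F p).2 k j else 0)) := by

  intro p
  induction p with
  | zero => exact fun i j k l => ⟨hEE i j k l, hEF i j k l⟩
  | succ q ih =>
    set G := (qGel E F q).1 with hGdef
    set H := (qGel E F q).2 with hHdef
    have hG : ∀ i j k l, E i j * G k l - G k l * E i j =
        (if j = k then G i l else 0) - (if i = l then G k j else 0) :=
      fun i j k l => (ih i j k l).1
    have hH : ∀ i j k l, E i j * H k l - H k l * E i j =
        (if j = k then H i l else 0) - (if i = l then H k j else 0) :=
      fun i j k l => (ih i j k l).2
    have hEG := comm_sum E E G hEE hG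
    have hEH := comm_sum E E H hEE hH
    have hFG := comm_sum E F G hEF hG
    have hFH := comm_sum E F H hEF hH
    intro i j k l
    set c : A := (-1 : A) ^ (q + 1) with hc
    have hcc : ∀ x : A, c * x = x * c := fun x =>
      ((Commute.neg_one_left x).pow_left (q + 1)).eq
    constructor
    · show E i j * ((∑ m, E k m * G m l) + c * ∑ m, F k m * H m l)
        - ((∑ m, E k m * G m l) + c * ∑ m, F k m * H m l) * E i j
        = (if j = k then (∑ m, E i m * G m l) + c * ∑ m, F i m * H m l else 0)
        - (if i = l then (∑ m, E k m * G m j) + c * ∑ m, F k m * H m j else 0)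
      have expand :
          E i j * ((∑ m, E k m * G m l) + c * ∑ m, F k m * H m l)
          - ((∑ m, E k m * G m l) + c * ∑ m, F k m * H m l) * E i j
          = (E i j * (∑ m, E k m * G m l) - (∑ m, E k m * G m l) * E i j)
          + c * (E i j * (∑ m, F k m * H m l) - (∑ m, F k m * H m l) * E i j) := by
        rw [mul_add, add_mul, ← mul_assoc, ← hcc (E i j), mul_assoc, mul_assoc]
        noncomm_ring
      rw [expand, hEG i j k l, hFH i j k l]
      split_ifs <;> noncomm_ring
    · show E i j * ((∑ m, E k m * H m l) + c * ∑ m, F k m * G m l)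
        - ((∑ m, E k m * H m l) + c * ∑ m, F k m * G m l) * E i j
        = (if j = k then (∑ m, E i m * H m l) + c * ∑ m, F i m * G m l else 0)
        - (if i = l then (∑ m, E k m * H m j) + c * ∑ m, F k m * G m j else 0)
      have expand :
          E i j * ((∑ m, E k m * H m l) + c * ∑ m, F k m * G m l)
          - ((∑ m, E k m * H m l) + c * ∑ m, F k m * G m l) * E i j
          = (E i j * (∑ m, E k m * H m l) - (∑ m, E k m * H m l) * E i j)
          + c * (E i j * (∑ m, F k m * G m l) - (∑ m, F k m * G m l) * E i j) := by
        rw [mul_add, add_mul, ← mul_assoc, ← hcc (E i j), mul_assoc, mul_assoc]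
        noncomm_ring
      rw [expand, hEH i j k l, hFG i j k l]
      split_ifs <;> noncomm_ring
end

section
/- With the notation of the Gelfand invariants for $\mathfrak{q}(n)$ ($e_{ij}^{(p)}, f_{ij}^{(p)}$ defined inductively as above), one also has $[f_{ij}, e_{kl}^{(p)}] = (-1)^{p+1}\delta_{jk} f_{il}^{(p)} - \delta_{il} f_{kj}^{(p)}$ and $[f_{ij}, f_{kl}^{(p)}] = (-1)^{p+1}\delta_{jk} e_{il}^{(p)} + \delta_{il} e_{kj}^{(p)}$, where $[\cdot,\cdot]$ denotes the supercommutator in $U(\mathfrak{q}(n))$. -/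
private lemma qij_ee {A : Type*} [Ring A] {n : ℕ} (f : A) (a b : Fin n → A) :
    f * (∑ m, a m * b m) - (∑ m, a m * b m) * f
    = ∑ m, ((f * a m - a m * f) * b m + a m * (f * b m - b m * f)) := by
  rw [Finset.mul_sum, Finset.sum_mul, ← Finset.sum_sub_distrib]
  exact Finset.sum_congr rfl fun m _ => by noncomm_ring

private lemma qij_oo {A : Type*} [Ring A] {n : ℕ} (f : A) (a b : Fin n → A) :
    f * (∑ m, a m * b m) - (∑ m, a m * b m) * f
    = ∑ m, ((f * a m + a m * f) * b m - a m * (f * b m + b m * f)) := by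
  rw [Finset.mul_sum, Finset.sum_mul, ← Finset.sum_sub_distrib]
  exact Finset.sum_congr rfl fun m _ => by noncomm_ring

private lemma qij_eo {A : Type*} [Ring A] {n : ℕ} (f : A) (a b : Fin n → A) :
    f * (∑ m, a m * b m) + (∑ m, a m * b m) * f
    = ∑ m, ((f * a m - a m * f) * b m + a m * (f * b m + b m * f)) := by
  rw [Finset.mul_sum, Finset.sum_mul, ← Finset.sum_add_distrib]
  exact Finset.sum_congr rfl fun m _ => by noncomm_ring

private lemma qij_oe {A : Type*} [Ring A] {n : ℕ} (f : A) (a b : Fin n → A) :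
    f * (∑ m, a m * b m) + (∑ m, a m * b m) * f
    = ∑ m, ((f * a m + a m * f) * b m - a m * (f * b m - b m * f)) := by
  rw [Finset.mul_sum, Finset.sum_mul, ← Finset.sum_add_distrib]
  exact Finset.sum_congr rfl fun m _ => by noncomm_ring

private lemma qij_split_comm {A : Type*} [Ring A] (f x y c : A) (hc : c * f = f * c) :
    f * (x + c * y) - (x + c * y) * f = (f * x - x * f) + c * (f * y - y * f) := by
  have h : f * (c * y) = c * (f * y) := by rw [← mul_assoc, ← hc, mul_assoc]
  rw [mul_add, add_mul, h]; noncomm_ring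

private lemma qij_split_acomm {A : Type*} [Ring A] (f x y c : A) (hc : c * f = f * c) :
    f * (x + c * y) + (x + c * y) * f = (f * x + x * f) + c * (f * y + y * f) := by
  have h : f * (c * y) = c * (f * y) := by rw [← mul_assoc, ← hc, mul_assoc]
  rw [mul_add, add_mul, h]; noncomm_ring

theorem stmt11 (n : ℕ) (A : Type*) [Ring A] (E F : Fin n → Fin n → A)
    (hEE : ∀ i j k l, E i j * E k l - E k l * E i j =
      (if j = k then E i l else 0) - (if i = l then E k j else 0))
    (hEF : ∀ i j k l, E i j * F k l - F k l * E i j =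
      (if j = k then F i l else 0) - (if i = l then F k j else 0))
    (hFF : ∀ i j k l, F i j * F k l + F k l * F i j =
      (if j = k then E i l else 0) + (if i = l then E k j else 0)) :
    -- `qGel E F p` is the Gelfand invariant of order `P = p + 1`, so the signs
    -- `(-1)^{P+1}` of (1.4.4) become `(-1)^p`:
    ∀ (p : ℕ) (i j k l : Fin n),
      (F i j * (qGel E F p).1 k l - (qGel E F p).1 k l * F i j =
        (-1 : A) ^ p * (if j = k then (qGel E F p).2 i l else 0) -
        (if i = l then (qGel E F p).2 k j else 0)) ∧
      (F i j * (qGel E F p).2 k l + (qGel E F p).2 k l * F i j =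
        (-1 : A) ^ p * (if j = k then (qGel E F p).1 i l else 0) +
        (if i = l then (qGel E F p).1 k j else 0)) := by
  have hFE : ∀ i j k l, F i j * E k l - E k l * F i j =
      (if j = k then F i l else 0) - (if i = l then F k j else 0) := by
    intro i j k l
    have h := hEF k l i j
    have e1 : F i j * E k l - E k l * F i j
        = -(E k l * F i j - F i j * E k l) := by noncomm_ring
    rw [e1, h, neg_sub]
    by_cases h1 : j = k <;> by_cases h2 : i = l <;> simp [h1, h2, Ne.symm]
  intro p
  induction p with
  | zero =>
    intro i j k l
    exact ⟨by simpa [qGel] using hFE i j k l, by simpa [qGel] using hFF i j k l⟩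
  | succ p IH =>
    intro i j k l
    have hc : (-1 : A) ^ (p + 1) * F i j = F i j * (-1 : A) ^ (p + 1) :=
      ((Commute.neg_one_left (F i j)).pow_left (p + 1))
    have hsg : ((-1 : A) ^ p = 1 ∧ (-1 : A) ^ (p + 1) = -1) ∨
        ((-1 : A) ^ p = -1 ∧ (-1 : A) ^ (p + 1) = 1) := by
      rcases Nat.even_or_odd p with hp | hp
      · exact Or.inl ⟨hp.neg_one_pow, by rw [pow_succ, hp.neg_one_pow, one_mul]⟩
      · refine Or.inr ⟨hp.neg_one_pow, ?_⟩
        rw [pow_succ, hp.neg_one_pow]; noncomm_ring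
    have IH1 : ∀ a b, F i j * (qGel E F p).1 a b - (qGel E F p).1 a b * F i j =
        (-1 : A) ^ p * (if j = a then (qGel E F p).2 i b else 0) -
        (if i = b then (qGel E F p).2 a j else 0) := fun a b => (IH i j a b).1
    have IH2 : ∀ a b, F i j * (qGel E F p).2 a b + (qGel E F p).2 a b * F i j =
        (-1 : A) ^ p * (if j = a then (qGel E F p).1 i b else 0) +
        (if i = b then (qGel E F p).1 a j else 0) := fun a b => (IH i j a b).2
    constructor
    · -- commutator with the even part
      show F i j * ((∑ m, E k m * (qGel E F p).1 m l) +
            (-1 : A) ^ (p + 1) * ∑ m, F k m * (qGel E F p).2 m l) -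
          ((∑ m, E k m * (qGel E F p).1 m l) +
            (-1 : A) ^ (p + 1) * ∑ m, F k m * (qGel E F p).2 m l) * F i j = _
      rw [qij_split_comm _ _ _ _ hc,
        qij_ee (F i j) (fun m => E k m) (fun m => (qGel E F p).1 m l),
        qij_oo (F i j) (fun m => F k m) (fun m => (qGel E F p).2 m l)]
      simp only [hFE, hFF, IH1, IH2]
      show _ = (-1 : A) ^ (p + 1) * (if j = k then
            (∑ m, E i m * (qGel E F p).2 m l) +
            (-1 : A) ^ (p + 1) * ∑ m, F i m * (qGel E F p).1 m l else 0) -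
          (if i = l then (∑ m, E k m * (qGel E F p).2 m j) +
            (-1 : A) ^ (p + 1) * ∑ m, F k m * (qGel E F p).1 m j else 0)
      rcases hsg with ⟨h1, h2⟩ | ⟨h1, h2⟩ <;> simp only [h1, h2] <;>
        by_cases hjk : j = k <;> by_cases hil : i = l <;>
        simp [hjk, hil, sub_mul, add_mul, mul_sub, mul_add, mul_ite, ite_mul,
          Finset.sum_add_distrib, Finset.sum_sub_distrib, Finset.sum_ite_eq] <;>
        first | abel | noncomm_ring
    · -- anticommutator with the odd part
      show F i j * ((∑ m, E k m * (qGel E F p).2 m l) +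
            (-1 : A) ^ (p + 1) * ∑ m, F k m * (qGel E F p).1 m l) +
          ((∑ m, E k m * (qGel E F p).2 m l) +
            (-1 : A) ^ (p + 1) * ∑ m, F k m * (qGel E F p).1 m l) * F i j = _
      rw [qij_split_acomm _ _ _ _ hc,
        qij_eo (F i j) (fun m => E k m) (fun m => (qGel E F p).2 m l),
        qij_oe (F i j) (fun m => F k m) (fun m => (qGel E F p).1 m l)]
      simp only [hFE, hFF, IH1, IH2]
      show _ = (-1 : A) ^ (p + 1) * (if j = k then
            (∑ m, E i m * (qGel E F p).1 m l) +
            (-1 : A) ^ (p + 1) * ∑ m, F i m * (qGel E F p).2 m l else 0) +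
          (if i = l then (∑ m, E k m * (qGel E F p).1 m j) +
            (-1 : A) ^ (p + 1) * ∑ m, F k m * (qGel E F p).2 m j else 0)
      rcases hsg with ⟨h1, h2⟩ | ⟨h1, h2⟩ <;> simp only [h1, h2] <;>
        by_cases hjk : j = k <;> by_cases hil : i = l <;>
        simp [hjk, hil, sub_mul, add_mul, mul_sub, mul_add, mul_ite, ite_mul,
          Finset.sum_add_distrib, Finset.sum_sub_distrib, Finset.sum_ite_eq] <;>
        first | abel | noncomm_ring
end

section
/- In $U(\mathfrak{q}(n))$ with $z_3 = \sum_i e_{ii}^{(3)}$, and $M(\mu)$ the Verma module of highest weight $\mu = (\mu_1,\dots,\mu_n)$ with highest weight vector $v_\mu$ (killed by all $e_{ij}, f_{ij}$ with $i < j$, with $e_{ii} v_\mu = \mu_i v_\mu$ and $f_{ii}$ acting within the highest weight space), one has $z_3 v_\mu = \big(\sum_i \mu_i^3 - (\sum_i \mu_i)^2\big) v_\mu$ up to vectors in the highest weight space; in particular the central character satisfies $\chi_\mu(z_3) = \sum_i \mu_i^3 - (\sum_i \mu_i)^2$. -/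
open Finset

section helpers
set_option linter.unusedSectionVars false
variable {n : ℕ} {A : Type*} [Ring A] [Algebra ℂ A] (E F : Fin n → Fin n → A)

def qe2 (a b : Fin n) : A := (∑ m, E a m * E m b) - ∑ m, F a m * F m b
def qf2 (a b : Fin n) : A := (∑ m, E a m * F m b) - ∑ m, F a m * E m b

variable (hEE : ∀ i j k l, E i j * E k l - E k l * E i j =
      (if j = k then E i l else 0) - (if i = l then E k j else 0))
    (hEF : ∀ i j k l, E i j * F k l - F k l * E i j =
      (if j = k then F i l else 0) - (if i = l then F k j else 0))
    (hFF : ∀ i j k l, F i j * F k l + F k l * F i j =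
      (if j = k then E i l else 0) + (if i = l then E k j else 0))
    (V : Type*) [AddCommGroup V] [Module ℂ V] [Module A V] [IsScalarTower ℂ A V]
    (μ : Fin n → ℂ) (v : V)
    (hve : ∀ i j : Fin n, i < j → E i j • v = 0)
    (hvf : ∀ i j : Fin n, i < j → F i j • v = 0)
    (hvh : ∀ i : Fin n, E i i • v = μ i • v)

include hEE hEF in
lemma comm1 (i l : Fin n) :
    E i l * qe2 E F l i = qe2 E F l i * E i l + qe2 E F i i - qe2 E F l l := by
  have hEm : ∀ m, E i l * (E l m * E m i)
      = (E l m * E m i) * E i l + (E i m - if i = m then E l l else 0) * E m i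
        + E l m * ((if l = m then E i i else 0) - E m l) := by
    intro m
    have h1 := hEE i l l m
    have h2 := hEE i l m i
    rw [if_pos rfl] at h1 h2
    calc E i l * (E l m * E m i)
        = (E l m * E m i) * E i l + (E i l * E l m - E l m * E i l) * E m i
          + E l m * (E i l * E m i - E m i * E i l) := by noncomm_ring
      _ = _ := by rw [h1, h2]
  have hFm : ∀ m, E i l * (F l m * F m i)
      = (F l m * F m i) * E i l + (F i m - if i = m then F l l else 0) * F m i
        + F l m * ((if l = m then F i i else 0) - F m l) := by
    intro m
    have h1 := hEF i l l m
    have h2 := hEF i l m i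
    rw [if_pos rfl] at h1 h2
    calc E i l * (F l m * F m i)
        = (F l m * F m i) * E i l + (E i l * F l m - F l m * E i l) * F m i
          + F l m * (E i l * F m i - F m i * E i l) := by noncomm_ring
      _ = _ := by rw [h1, h2]
  have hEsum : E i l * (∑ m, E l m * E m i)
      = (∑ m, E l m * E m i) * E i l + ((∑ m, E i m * E m i) - E l l * E i i)
        + (E l l * E i i - ∑ m, E l m * E m l) := by
    rw [Finset.mul_sum, Finset.sum_congr rfl fun m _ => hEm m]
    simp only [sub_mul, mul_sub, ite_mul, mul_ite, zero_mul, mul_zero,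
      Finset.sum_add_distrib, Finset.sum_sub_distrib, Finset.sum_ite_eq,
      Finset.mem_univ, if_true, Finset.sum_mul]
  have hFsum : E i l * (∑ m, F l m * F m i)
      = (∑ m, F l m * F m i) * E i l + ((∑ m, F i m * F m i) - F l l * F i i)
        + (F l l * F i i - ∑ m, F l m * F m l) := by
    rw [Finset.mul_sum, Finset.sum_congr rfl fun m _ => hFm m]
    simp only [sub_mul, mul_sub, ite_mul, mul_ite, zero_mul, mul_zero,
      Finset.sum_add_distrib, Finset.sum_sub_distrib, Finset.sum_ite_eq,
      Finset.mem_univ, if_true, Finset.sum_mul]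
  simp only [qe2, mul_sub, sub_mul, hEsum, hFsum]
  abel


include hEF hFF in
lemma comm3 (i l : Fin n) :
    F i l * qf2 E F l i = -(qf2 E F l i * F i l) + qe2 E F l l - qe2 E F i i := by
  have hAm : ∀ m, F i l * (E l m * F m i)
      = -((E l m * F m i) * F i l) + (F i m - if m = i then F l l else 0) * F m i
        + E l m * ((if l = m then E i i else 0) + E m l) := by
    intro m
    have h1 := hEF l m i l
    have h2 := hFF i l m i
    rw [if_pos rfl] at h1 h2
    -- h1 : E l m * F i l - F i l * E l m = (if m = i then F l l else 0) - F i m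
    -- h2 : F i l * F m i + F m i * F i l = (if l = m then E i i else 0) + E m l
    calc F i l * (E l m * F m i)
        = -((E l m * F m i) * F i l) - (E l m * F i l - F i l * E l m) * F m i
          + E l m * (F i l * F m i + F m i * F i l) := by noncomm_ring
      _ = _ := by rw [h1, h2]; noncomm_ring
  have hBm : ∀ m, F i l * (F l m * E m i)
      = -((F l m * E m i) * F i l) + (E i m + if i = m then E l l else 0) * E m i
        + F l m * (F m l - if m = l then F i i else 0) := by
    intro m
    have h1 := hFF i l l m
    have h2 := hEF m i i l
    rw [if_pos rfl] at h1 h2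
    -- h1 : F i l * F l m + F l m * F i l = E i m + (if i = m then E l l else 0)
    -- h2 : E m i * F i l - F i l * E m i = F m l - (if m = l then F i i else 0)
    calc F i l * (F l m * E m i)
        = -((F l m * E m i) * F i l) + (F i l * F l m + F l m * F i l) * E m i
          + F l m * (E m i * F i l - F i l * E m i) := by noncomm_ring
      _ = _ := by rw [h1, h2]
  have hAsum : F i l * (∑ m, E l m * F m i)
      = -((∑ m, E l m * F m i) * F i l) + ((∑ m, F i m * F m i) - F l l * F i i)
        + (E l l * E i i + ∑ m, E l m * E m l) := by
    rw [Finset.mul_sum, Finset.sum_congr rfl fun m _ => hAm m]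
    simp only [sub_mul, mul_sub, mul_add, add_mul, ite_mul, mul_ite, zero_mul, mul_zero,
      Finset.sum_add_distrib, Finset.sum_sub_distrib, Finset.sum_ite_eq, Finset.sum_ite_eq',
      Finset.mem_univ, if_true, Finset.sum_mul, Finset.sum_neg_distrib]
  have hBsum : F i l * (∑ m, F l m * E m i)
      = -((∑ m, F l m * E m i) * F i l) + ((∑ m, E i m * E m i) + E l l * E i i)
        + ((∑ m, F l m * F m l) - F l l * F i i) := by
    rw [Finset.mul_sum, Finset.sum_congr rfl fun m _ => hBm m]
    simp only [sub_mul, mul_sub, mul_add, add_mul, ite_mul, mul_ite, zero_mul, mul_zero,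
      Finset.sum_add_distrib, Finset.sum_sub_distrib, Finset.sum_ite_eq, Finset.sum_ite_eq',
      Finset.mem_univ, if_true, Finset.sum_mul, Finset.sum_neg_distrib]
  simp only [qf2, qe2, mul_sub, sub_mul, neg_sub, hAsum, hBsum]
  abel

lemma csmul (x : A) (a : ℂ) (w : V) : x • (a • w) = a • (x • w) := by
  rw [← algebraMap_smul A a w, ← mul_smul, ← Algebra.commutes, mul_smul, algebraMap_smul]

include hEE hEF hFF hve hvf hvh in
lemma qe2v_lt (i j : Fin n) (hij : i < j) : qe2 E F i j • v = 0 := by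
  have hE : ∀ l, (E i l * E l j) • v = 0 := by
    intro l
    rcases lt_trichotomy l j with h | h | h
    · rw [mul_smul, hve l j h, smul_zero]
    · subst h
      rw [mul_smul, hvh, csmul, hve i l hij, smul_zero]
    · have hc := hEE i l l j
      rw [if_pos rfl, if_neg hij.ne] at hc
      have : E i l * E l j = E l j * E i l + (E i j - 0) := by
        rw [← hc]; noncomm_ring
      rw [this, sub_zero, add_smul, mul_smul, hve i l (hij.trans h), smul_zero,
        hve i j hij, zero_add]
  have hF : ∀ l, (F i l * F l j) • v = 0 := by
    intro l
    rcases lt_trichotomy l j with h | h | h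
    · rw [mul_smul, hvf l j h, smul_zero]
    · subst h
      have hc := hFF i l l l
      rw [if_pos rfl, if_neg hij.ne] at hc
      have : F i l * F l l = (E i l + 0) - F l l * F i l := by rw [← hc]; noncomm_ring
      rw [this, add_zero, sub_smul, hve i l hij, mul_smul, hvf i l hij, smul_zero, sub_zero]
    · have hc := hFF i l l j
      rw [if_pos rfl, if_neg hij.ne] at hc
      have : F i l * F l j = (E i j + 0) - F l j * F i l := by rw [← hc]; noncomm_ring
      rw [this, add_zero, sub_smul, hve i j hij, mul_smul, hvf i l (hij.trans h),
        smul_zero, sub_zero]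
  simp only [qe2, sub_smul, Finset.sum_smul]
  rw [Finset.sum_congr rfl fun l _ => hE l, Finset.sum_congr rfl fun l _ => hF l]
  simp

include hEE hEF hFF hve hvf hvh in
lemma qf2v_lt (i j : Fin n) (hij : i < j) : qf2 E F i j • v = 0 := by
  have hE : ∀ l, (E i l * F l j) • v = 0 := by
    intro l
    rcases lt_trichotomy l j with h | h | h
    · rw [mul_smul, hvf l j h, smul_zero]
    · subst h
      have hc := hEF i l l l
      rw [if_pos rfl, if_neg hij.ne] at hc
      have : E i l * F l l = F l l * E i l + (F i l - 0) := by rw [← hc]; noncomm_ring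
      rw [this, sub_zero, add_smul, mul_smul, hve i l hij, smul_zero, hvf i l hij, zero_add]
    · have hc := hEF i l l j
      rw [if_pos rfl, if_neg hij.ne] at hc
      have : E i l * F l j = F l j * E i l + (F i j - 0) := by rw [← hc]; noncomm_ring
      rw [this, sub_zero, add_smul, mul_smul, hve i l (hij.trans h), smul_zero,
        hvf i j hij, zero_add]
  have hF : ∀ l, (F i l * E l j) • v = 0 := by
    intro l
    rcases lt_trichotomy l j with h | h | h
    · rw [mul_smul, hve l j h, smul_zero]
    · subst h
      rw [mul_smul, hvh, csmul, hvf i l hij, smul_zero]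
    · have hc := hEF l j i l
      rw [if_pos rfl, if_neg hij.ne'] at hc
      have : F i l * E l j = E l j * F i l + F i j := by
        have h0 : F i l * E l j = E l j * F i l - (E l j * F i l - F i l * E l j) := by
          noncomm_ring
        rw [h0, hc]; noncomm_ring
      rw [this, add_smul, mul_smul, hvf i l (hij.trans h), smul_zero, hvf i j hij, zero_add]
  simp only [qf2, sub_smul, Finset.sum_smul]
  rw [Finset.sum_congr rfl fun l _ => hE l, Finset.sum_congr rfl fun l _ => hF l]
  simp

include hEE hEF hFF hve hvf hvh in
lemma qe2v_diag (i : Fin n) :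
    qe2 E F i i • v = (∑ l, if l = i then μ i ^ 2 - μ i else if i < l then -2 * μ l else 0) • v := by
  have key : ∀ l, (E i l * E l i) • v - (F i l * F l i) • v
      = (if l = i then μ i ^ 2 - μ i else if i < l then -2 * μ l else 0) • v := by
    intro l
    rcases lt_trichotomy l i with h | h | h
    · rw [if_neg h.ne, if_neg (asymm h), mul_smul, hve l i h, smul_zero, mul_smul,
        hvf l i h, smul_zero, zero_smul, sub_zero]
    · subst h
      rw [if_pos rfl]
      have hFsq : (F l l * F l l) • v = μ l • v := by
        have hc := hFF l l l l
        rw [if_pos rfl] at hc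
        have h2 : (F l l * F l l) • v + (F l l * F l l) • v = μ l • v + μ l • v := by
          rw [← add_smul, hc, add_smul, hvh]
        have h3 : (2:ℂ) • ((F l l * F l l) • v) = (2:ℂ) • (μ l • v) := by
          rw [two_smul, two_smul]; exact h2
        calc (F l l * F l l) • v = (2:ℂ)⁻¹ • ((2:ℂ) • ((F l l * F l l) • v)) :=
              (inv_smul_smul₀ two_ne_zero _).symm
          _ = (2:ℂ)⁻¹ • ((2:ℂ) • (μ l • v)) := by rw [h3]
          _ = μ l • v := inv_smul_smul₀ two_ne_zero _
      rw [mul_smul, hvh, csmul, hvh, hFsq, smul_smul, sub_smul, ← pow_two]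
    · rw [if_neg h.ne', if_pos h]
      have hcE := hEE i l l i
      rw [if_pos rfl, if_pos rfl] at hcE
      have hE : E i l * E l i = E l i * E i l + (E i i - E l l) := by
        rw [← hcE]; noncomm_ring
      have hcF := hFF i l l i
      rw [if_pos rfl, if_pos rfl] at hcF
      have hF : F i l * F l i = (E i i + E l l) - F l i * F i l := by
        rw [← hcF]; noncomm_ring
      rw [hE, hF, add_smul, mul_smul, hve i l h, smul_zero, zero_add, sub_smul, sub_smul,
        add_smul, mul_smul, hvf i l h, smul_zero, sub_zero, hvh, hvh]
      module
  simp only [qe2, sub_smul, Finset.sum_smul]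
  rw [← Finset.sum_sub_distrib, Finset.sum_congr rfl fun l _ => key l, ← Finset.sum_smul]

include hEE hEF hFF hve hvf hvh in
lemma qf2v_diag (i : Fin n) : qf2 E F i i • v = 0 := by
  have key : ∀ l, (E i l * F l i) • v - (F i l * E l i) • v = 0 := by
    intro l
    rcases lt_trichotomy l i with h | h | h
    · rw [mul_smul, hvf l i h, smul_zero, mul_smul, hve l i h, smul_zero, sub_zero]
    · subst h
      have hc := hEF l l l l
      rw [if_pos rfl, sub_self] at hc
      have : E l l * F l l = F l l * E l l := by rw [← sub_eq_zero]; exact hc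
      rw [this, sub_self]
    · have hc1 := hEF i l l i
      rw [if_pos rfl, if_pos rfl] at hc1
      have h1 : E i l * F l i = F l i * E i l + (F i i - F l l) := by rw [← hc1]; noncomm_ring
      have hc2 := hEF l i i l
      rw [if_pos rfl, if_pos rfl] at hc2
      have h2 : F i l * E l i = E l i * F i l + (F i i - F l l) := by
        have h0 : F i l * E l i = E l i * F i l - (E l i * F i l - F i l * E l i) := by
          noncomm_ring
        rw [h0, hc2]; noncomm_ring
      have e1 : (E i l * F l i) • v = F i i • v - F l l • v := by
        rw [h1, add_smul, mul_smul, hve i l h, smul_zero, zero_add, sub_smul]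
      have e2 : (F i l * E l i) • v = F i i • v - F l l • v := by
        rw [h2, add_smul, mul_smul, hvf i l h, smul_zero, zero_add, sub_smul]
      rw [e1, e2, sub_self]
  simp only [qf2, sub_smul, Finset.sum_smul]
  rw [← Finset.sum_sub_distrib, Finset.sum_congr rfl fun l _ => key l]
  simp

lemma qGel_one_fst : (qGel E F 1).1 = qe2 E F := by
  funext a b
  simp only [qGel, qe2, zero_add, pow_one, neg_one_mul, ← sub_eq_add_neg]

lemma qGel_one_snd : (qGel E F 1).2 = qf2 E F := by
  funext a b
  simp only [qGel, qf2, zero_add, pow_one, neg_one_mul, ← sub_eq_add_neg]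

lemma qGel_two_fst (i : Fin n) :
    (qGel E F 2).1 i i = (∑ l, E i l * qe2 E F l i) + ∑ l, F i l * qf2 E F l i := by
  have : (qGel E F 2).1 i i = (∑ l, E i l * (qGel E F 1).1 l i) +
      (-1 : A) ^ 2 * ∑ l, F i l * (qGel E F 1).2 l i := rfl
  rw [this, qGel_one_fst, qGel_one_snd]
  norm_num

lemma scalar_id (μ : Fin n → ℂ) :
    ∑ i, μ i * ∑ l, (if l = i then μ i ^ 2 - μ i else if i < l then -2 * μ l else 0)
      = (∑ i, μ i ^ 3) - (∑ i, μ i) ^ 2 := by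
  have swap : ∑ i, ∑ l, (if l < i then μ i * μ l else 0)
      = ∑ i, ∑ l, (if i < l then μ i * μ l else 0) := by
    rw [Finset.sum_comm]
    refine Finset.sum_congr rfl fun i _ => Finset.sum_congr rfl fun l _ => ?_
    split_ifs with h
    · ring
    · rfl
  have expand : ∀ i, μ i * ∑ l, (if l = i then μ i ^ 2 - μ i else if i < l then -2 * μ l else 0)
      = ∑ l, ((if l = i then μ i ^ 3 else 0) - μ i * μ l
          + ((if l < i then μ i * μ l else 0) - (if i < l then μ i * μ l else 0))) := by
    intro i
    rw [Finset.mul_sum]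
    refine Finset.sum_congr rfl fun l _ => ?_
    rcases lt_trichotomy l i with h | h | h
    · simp only [if_neg h.ne, if_neg (asymm h), if_pos h]; ring
    · subst h
      simp [lt_irrefl]; ring
    · simp only [if_neg h.ne', if_pos h, if_neg (asymm h)]; ring
  rw [Finset.sum_congr rfl fun i _ => expand i]
  simp only [Finset.sum_add_distrib, Finset.sum_sub_distrib]
  rw [swap]
  simp only [Finset.sum_ite_eq', Finset.mem_univ, if_true, ← Finset.mul_sum]
  rw [sq, Finset.sum_mul]
  ring

end helpers

theorem stmt15 (n : ℕ) (A : Type*) [Ring A] [Algebra ℂ A] (E F : Fin n → Fin n → A)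
    -- the defining relations of `𝔮(n)` inside `U(𝔮(n))`:
    (hEE : ∀ i j k l, E i j * E k l - E k l * E i j =
      (if j = k then E i l else 0) - (if i = l then E k j else 0))
    (hEF : ∀ i j k l, E i j * F k l - F k l * E i j =
      (if j = k then F i l else 0) - (if i = l then F k j else 0))
    (hFF : ∀ i j k l, F i j * F k l + F k l * F i j =
      (if j = k then E i l else 0) + (if i = l then E k j else 0))
    -- a Verma-type highest weight vector `v` of weight `μ`:
    (V : Type*) [AddCommGroup V] [Module ℂ V] [Module A V] [IsScalarTower ℂ A V]
    (μ : Fin n → ℂ) (v : V)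
    (hve : ∀ i j : Fin n, i < j → E i j • v = 0)
    (hvf : ∀ i j : Fin n, i < j → F i j • v = 0)
    (hvh : ∀ i : Fin n, E i i • v = μ i • v) :
    -- `z₃ = ∑_i e_{ii}^{(3)}` acts on `v` by `∑ μ_i³ - (∑ μ_i)²`:
    (∑ i, (qGel E F 2).1 i i) • v = ((∑ i, μ i ^ 3) - (∑ i, μ i) ^ 2) • v := by
  classical
  have key : ∀ i : Fin n, ((qGel E F 2).1 i i) • v
      = (μ i * ∑ l, (if l = i then μ i ^ 2 - μ i else if i < l then -2 * μ l else 0)) • v := by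
    intro i
    rw [qGel_two_fst]
    have hterm : ∀ l, (E i l * qe2 E F l i) • v + (F i l * qf2 E F l i) • v
        = if l = i then (μ i * ∑ m, (if m = i then μ i ^ 2 - μ i else if i < m then -2 * μ m else 0)) • v else 0 := by
      intro l
      rcases lt_trichotomy l i with h | h | h
      · rw [if_neg h.ne, mul_smul, qe2v_lt E F hEE hEF hFF V μ v hve hvf hvh l i h, smul_zero,
          mul_smul, qf2v_lt E F hEE hEF hFF V μ v hve hvf hvh l i h, smul_zero, add_zero]
      · subst h
        rw [if_pos rfl, mul_smul, mul_smul, qf2v_diag E F hEE hEF hFF V μ v hve hvf hvh l,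
          smul_zero, add_zero, qe2v_diag E F hEE hEF hFF V μ v hve hvf hvh l,
          csmul, hvh, smul_smul, mul_comm]
      · rw [if_neg h.ne', comm1 E F hEE hEF i l, comm3 E F hEF hFF i l]
        have hA : (qe2 E F l i * E i l + qe2 E F i i - qe2 E F l l) • v
            = (qe2 E F i i) • v - (qe2 E F l l) • v := by
          rw [sub_smul, add_smul, mul_smul, hve i l h, smul_zero, zero_add]
        have hB : (-(qf2 E F l i * F i l) + qe2 E F l l - qe2 E F i i) • v
            = (qe2 E F l l) • v - (qe2 E F i i) • v := by
          rw [sub_smul, add_smul, neg_smul, mul_smul, hvf i l h, smul_zero, neg_zero, zero_add]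
        rw [hA, hB]
        abel
    rw [add_smul, Finset.sum_smul, Finset.sum_smul, ← Finset.sum_add_distrib,
      Finset.sum_congr rfl fun l _ => hterm l, Finset.sum_ite_eq' Finset.univ i]
    simp
  rw [Finset.sum_smul, Finset.sum_congr rfl fun i _ => key i, ← Finset.sum_smul,
    scalar_id μ]
end

section
/- With $\varphi_i = \sum_{\alpha \in R^+} \frac{\alpha(e_i)}{\Delta_\alpha^+ \Delta_\alpha^-}$, $\psi_i = \sum_{\alpha \in R^+} \frac{\alpha(e_i)^2}{(\Delta_\alpha^+)^2}$, $\Theta_i = \sum_{\{\alpha,\beta\} \subset R^+} \frac{\alpha(e_i)\beta(e_i)}{\Delta_\alpha^+\Delta_\alpha^-\Delta_\beta^+\Delta_\beta^-}$ (sum over two-element subsets), where $R^+ = \{\varepsilon_i - \varepsilon_j : 1 \le i < j \le n\}$, $\Delta_\alpha^\pm = e^{\alpha/2} \pm e^{-\alpha/2}$, and $\partial_i e^\lambda = \lambda(e_i)e^\lambda$, one has the identity of rational functions $24\Theta_i - 6\psi_i - 12\varphi_i^2 - 6\partial_i(\varphi_i) = 0$ for each $i$. -/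
open MvPolynomial Finset

/-- The images `x_j = e^{ε_j}` of the variables in the field of rational functions. -/
noncomputable def xv {n : ℕ} (j : Fin n) : FractionRing (MvPolynomial (Fin n) ℂ) :=
  algebraMap (MvPolynomial (Fin n) ℂ) (FractionRing (MvPolynomial (Fin n) ℂ))
    (MvPolynomial.X j)

/-- The positive roots `R⁺ = {ε_j - ε_k : j < k}`, as pairs `j < k`. -/
def posRoots (n : ℕ) : Finset (Fin n × Fin n) :=
  Finset.univ.filter fun p : Fin n × Fin n => p.1 < p.2

/-- `α(e_i)` for `α = ε_{p.1} - ε_{p.2} ∈ R⁺`. -/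
noncomputable def aval {n : ℕ} (i : Fin n) (p : Fin n × Fin n) :
    FractionRing (MvPolynomial (Fin n) ℂ) :=
  if p.1 = i then 1 else if p.2 = i then -1 else 0

/-- `Δ_α⁺ Δ_α⁻ = e^α - e^{-α}` for `α = ε_{p.1} - ε_{p.2}` (here `e^{ε_j} = x_j`). -/
noncomputable def dpm {n : ℕ} (p : Fin n × Fin n) :
    FractionRing (MvPolynomial (Fin n) ℂ) :=
  xv p.1 / xv p.2 - xv p.2 / xv p.1

/-- `(Δ_α⁺)² = e^α + 2 + e^{-α}` for `α = ε_{p.1} - ε_{p.2}`. -/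
noncomputable def dpsq {n : ℕ} (p : Fin n × Fin n) :
    FractionRing (MvPolynomial (Fin n) ℂ) :=
  xv p.1 / xv p.2 + 2 + xv p.2 / xv p.1

lemma xv_ne_zero {n : ℕ} (j : Fin n) : xv j ≠ 0 := by
  simp only [xv, ne_eq, map_eq_zero_iff _ (IsFractionRing.injective (MvPolynomial (Fin n) ℂ) _)]
  exact MvPolynomial.X_ne_zero j

lemma xv_sub_ne_zero {n : ℕ} {j k : Fin n} (h : j ≠ k) : xv j - xv k ≠ 0 := by
  rw [sub_ne_zero]
  simp only [xv, ne_eq]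
  intro hc
  exact h (MvPolynomial.X_injective (IsFractionRing.injective (MvPolynomial (Fin n) ℂ) _ hc))

lemma xv_add_ne_zero {n : ℕ} (j k : Fin n) : xv j + xv k ≠ 0 := by
  rw [xv, xv, ← RingHom.map_add]
  rw [ne_eq, map_eq_zero_iff _ (IsFractionRing.injective (MvPolynomial (Fin n) ℂ) _)]
  intro hc
  have := congrArg (MvPolynomial.eval fun _ => (1 : ℂ)) hc
  simp at this

lemma key_identity (K : Type*) [Field K] (x y : K) (hx : x ≠ 0) (hy : y ≠ 0)
    (h1 : x - y ≠ 0) (h2 : x + y ≠ 0) :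
    -((x/y - y/x)⁻¹^2 * (x/y + y/x)) = -(1/(x/y+2+y/x)) - 2*(1/(x/y - y/x))^2 := by
  have hd : x/y - y/x = (x-y)*(x+y)/(x*y) := by field_simp; ring
  have hs : x/y + 2 + y/x = (x+y)^2/(x*y) := by field_simp; ring
  rw [hd, hs]
  field_simp
  ring

set_option maxHeartbeats 2000000 in
set_option synthInstance.maxHeartbeats 400000 in
theorem stmt17 (n : ℕ) (i : Fin n)
    -- `D` is the derivation `∂_i = x_i ∂/∂x_i`:
    (D : Derivation ℂ (FractionRing (MvPolynomial (Fin n) ℂ))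
          (FractionRing (MvPolynomial (Fin n) ℂ)))
    (hD : ∀ j : Fin n, D (xv j) = if j = i then xv i else 0) :
    -- `24 Θ_i - 6 ψ_i - 12 φ_i² - 6 ∂_i(φ_i) = 0`, where
    -- `φ_i = ∑_{α∈R⁺} α(e_i)/(Δ_α⁺Δ_α⁻)`, `ψ_i = ∑_{α∈R⁺} α(e_i)²/(Δ_α⁺)²`, and
    -- `Θ_i = ∑_{{α,β}⊆R⁺} α(e_i)β(e_i)/(Δ_α⁺Δ_α⁻Δ_β⁺Δ_β⁻)` over two-element subsets:
    24 * ((2 : FractionRing (MvPolynomial (Fin n) ℂ))⁻¹ *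
        ∑ p ∈ posRoots n, ∑ q ∈ (posRoots n).erase p,
          (aval i p * aval i q) / (dpm p * dpm q))
      - 6 * (∑ p ∈ posRoots n, (aval i p) ^ 2 / dpsq p)
      - 12 * (∑ p ∈ posRoots n, aval i p / dpm p) ^ 2
      - 6 * D (∑ p ∈ posRoots n, aval i p / dpm p) = 0 := by
  set K := FractionRing (MvPolynomial (Fin n) ℂ)
  set s := posRoots n with hs
  set f : Fin n × Fin n → K := fun p => aval i p / dpm p with hf
  have key : ∀ p ∈ s, D (f p) = -(aval i p ^ 2 / dpsq p) - 2 * (f p)^2 := by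
    intro p hp
    rw [hs] at hp
    have hplt : p.1 < p.2 := by simpa [posRoots] using hp
    have hpne : p.1 ≠ p.2 := ne_of_lt hplt
    have hx := xv_ne_zero p.1
    have hy := xv_ne_zero p.2
    have h1 := xv_sub_ne_zero hpne
    have h2 := xv_add_ne_zero p.1 p.2
    have hdpm : dpm p = (xv p.1 - xv p.2) * (xv p.1 + xv p.2) / (xv p.1 * xv p.2) := by
      rw [dpm]; field_simp; ring
    have hdpm0 : dpm p ≠ 0 := by
      rw [hdpm]
      exact div_ne_zero (mul_ne_zero h1 h2) (mul_ne_zero hx hy)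
    have hdpsq : dpsq p = (xv p.1 + xv p.2) ^ 2 / (xv p.1 * xv p.2) := by
      rw [dpsq]; field_simp; ring
    simp only [hf]
    have hdpsq0 : dpsq p ≠ 0 := by
      rw [hdpsq]; exact div_ne_zero (pow_ne_zero 2 h2) (mul_ne_zero hx hy)
    have hid : xv p.1 / xv p.2 + xv p.2 / xv p.1 = ((dpm p) ^ 2 + 2 * dpsq p) / dpsq p := by
      rw [hdpm, hdpsq]; field_simp; ring
    by_cases hi1 : p.1 = i
    · have hi2 : p.2 ≠ i := fun h => hpne (hi1.trans h.symm)
      have ha : aval i p = 1 := by simp [aval, hi1]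
      have hDdpm : D (dpm p) = xv p.1 / xv p.2 + xv p.2 / xv p.1 := by
        rw [dpm, Derivation.map_sub, Derivation.leibniz_div, Derivation.leibniz_div,
          hD p.1, hD p.2, if_pos hi1, if_neg hi2, ← hi1]
        simp only [smul_eq_mul]
        field_simp
        ring
      rw [ha, one_div, Derivation.leibniz_inv, hDdpm, hid]
      simp only [smul_eq_mul]
      linear_combination (-(dpsq p)⁻¹ * (dpm p * (dpm p)⁻¹ + 1)) * mul_inv_cancel₀ hdpm0 +
          (-2 * (dpm p)⁻¹ ^ 2) * mul_inv_cancel₀ hdpsq0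
    · by_cases hi2 : p.2 = i
      · have ha : aval i p = -1 := by simp [aval, hi1, hi2]
        have hDdpm : D (dpm p) = -(xv p.1 / xv p.2 + xv p.2 / xv p.1) := by
          rw [dpm, Derivation.map_sub, Derivation.leibniz_div, Derivation.leibniz_div,
            hD p.1, hD p.2, if_pos hi2, if_neg hi1, ← hi2]
          simp only [smul_eq_mul]
          linear_combination (-(xv p.1) * (xv p.2)⁻¹) * mul_inv_cancel₀ hy +
            (-(xv p.2) * (xv p.1)⁻¹) * mul_inv_cancel₀ hx
        rw [ha, show (-1 : K) / dpm p = -(1 / dpm p) by ring, map_neg, one_div,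
          Derivation.leibniz_inv, hDdpm, hid]
        simp only [smul_eq_mul]
        linear_combination (-(dpsq p)⁻¹ * (dpm p * (dpm p)⁻¹ + 1)) * mul_inv_cancel₀ hdpm0 +
          (-2 * (dpm p)⁻¹ ^ 2) * mul_inv_cancel₀ hdpsq0
      · have ha : aval i p = 0 := by simp [aval, hi1, hi2]
        simp [ha]
  have hsq : (∑ p ∈ s, f p)^2
      = ∑ p ∈ s, (f p)^2 + ∑ p ∈ s, ∑ q ∈ s.erase p, f p * f q := by
    rw [sq, Finset.sum_mul_sum, ← Finset.sum_add_distrib]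
    refine Finset.sum_congr rfl fun p hp => ?_
    rw [← Finset.add_sum_erase s (fun q => f p * f q) hp, sq]
  have hcross : ∀ p ∈ s, ∀ q ∈ s.erase p,
      (aval i p * aval i q) / (dpm p * dpm q) = f p * f q := by
    intro p _ q _
    simp [hf, div_mul_div_comm]
  have hDsum : D (∑ p ∈ s, f p) = -(∑ p ∈ s, aval i p ^ 2 / dpsq p) - 2 * ∑ p ∈ s, (f p)^2 := by
    rw [map_sum, Finset.sum_congr rfl key, Finset.sum_sub_distrib, ← Finset.sum_neg_distrib,
      ← Finset.mul_sum]
  rw [Finset.sum_congr rfl (fun p hp => Finset.sum_congr rfl (hcross p hp)), hDsum, hsq]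
  have h24 : (24 : K) * (2⁻¹ * ∑ p ∈ s, ∑ q ∈ s.erase p, f p * f q)
      = 12 * ∑ p ∈ s, ∑ q ∈ s.erase p, f p * f q := by
    rw [← mul_assoc]; norm_num
  rw [h24]
  ring
end
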